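/- Define g(ℓ) := 6(ℓ−1)/((ℓ+1)(2ℓ+1)) for integers ℓ ≥ 1. Then g(ℓ+1) − g(ℓ) = 12(−ℓ² + ℓ + 3)/((ℓ+1)(ℓ+2)(2ℓ+1)(2ℓ+3)) for all ℓ ≥ 1; in particular g is strictly decreasing on {3,4,5,…}, and g(2) = g(4) = 2/5. Moreover, for every integer n ≥ 4, the value z := 6(n−1)/((n+1)(2n+1)) satisfies ∑_{t=1}^{ℓ} ⌈z·t²⌉ ≤ ℓ² for all ℓ ∈ [n]. -/
import Mathlib


noncomputable def g (ℓ : ℕ) : ℝ :=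
  6 * ((ℓ : ℝ) - 1) / (((ℓ : ℝ) + 1) * (2 * (ℓ : ℝ) + 1))

lemma gdiff (ℓ : ℕ) :
    g (ℓ + 1) - g ℓ
      = 12 * (-(ℓ : ℝ) ^ 2 + (ℓ : ℝ) + 3)
        / (((ℓ : ℝ) + 1) * ((ℓ : ℝ) + 2) * (2 * (ℓ : ℝ) + 1) * (2 * (ℓ : ℝ) + 3)) := by
  have h : (0:ℝ) ≤ (ℓ:ℝ) := Nat.cast_nonneg ℓ
  unfold g
  push_cast
  rw [div_sub_div _ _ (by positivity) (by positivity), div_eq_div_iff (by positivity) (by positivity)]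
  ring

lemma gmono (ℓ : ℕ) (hℓ : 3 ≤ ℓ) : g (ℓ + 1) < g ℓ := by
  have h : (3:ℝ) ≤ (ℓ:ℝ) := by exact_mod_cast hℓ
  have := gdiff ℓ
  have hd : (0:ℝ) < ((ℓ : ℝ) + 1) * ((ℓ : ℝ) + 2) * (2 * (ℓ : ℝ) + 1) * (2 * (ℓ : ℝ) + 3) := by
    nlinarith
  have hn : 12 * (-(ℓ : ℝ) ^ 2 + (ℓ : ℝ) + 3) < 0 := by nlinarith
  nlinarith [div_neg_of_neg_of_pos hn hd]

lemma ganti (a b : ℕ) (ha : 3 ≤ a) (hab : a ≤ b) : g b ≤ g a := by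
  induction b, hab using Nat.le_induction with
  | base => exact le_refl _
  | succ k hk ih => exact le_trans (le_of_lt (gmono k (le_trans ha hk))) ih

lemma sumsq (ℓ : ℕ) : (∑ t ∈ Finset.Icc 1 ℓ, (t:ℝ)^2) = ℓ*(ℓ+1)*(2*ℓ+1)/6 := by
  induction ℓ with
  | zero => simp
  | succ k ih =>
    rw [Finset.sum_Icc_succ_top (by omega), ih]
    push_cast
    ring

theorem stmt19 :
    (∀ ℓ : ℕ, 1 ≤ ℓ →
      g (ℓ + 1) - g ℓ
        = 12 * (-(ℓ : ℝ) ^ 2 + (ℓ : ℝ) + 3)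
          / (((ℓ : ℝ) + 1) * ((ℓ : ℝ) + 2) * (2 * (ℓ : ℝ) + 1) * (2 * (ℓ : ℝ) + 3))) ∧
    (∀ ℓ : ℕ, 3 ≤ ℓ → g (ℓ + 1) < g ℓ) ∧
    g 2 = 2 / 5 ∧ g 4 = 2 / 5 ∧
    (∀ n : ℕ, 4 ≤ n → ∀ ℓ ∈ Finset.Icc 1 n,
      (∑ t ∈ Finset.Icc 1 ℓ,
          ⌈(6 * ((n : ℝ) - 1) / (((n : ℝ) + 1) * (2 * (n : ℝ) + 1))) * (t : ℝ) ^ 2⌉)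
        ≤ (ℓ : ℤ) ^ 2) := by
  refine ⟨fun ℓ _ => gdiff ℓ, gmono, by norm_num [g], by norm_num [g], ?_⟩
  intro n hn ℓ hℓ
  rw [Finset.mem_Icc] at hℓ
  set z : ℝ := 6 * ((n : ℝ) - 1) / (((n : ℝ) + 1) * (2 * (n : ℝ) + 1)) with hzdef
  have hzg : z = g n := rfl
  have hn4 : (4:ℝ) ≤ (n:ℝ) := by exact_mod_cast hn
  have hz25 : z ≤ 2/5 := by
    have := ganti 4 n (by norm_num) hn
    rw [hzg]
    calc g n ≤ g 4 := this
    _ = 2/5 := by norm_num [g]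
  have hzpos : 0 < z := by
    rw [hzdef]
    apply div_pos (by nlinarith) (by nlinarith)
  have hc1 : ⌈z * (1:ℝ)^2⌉ ≤ 1 := by
    rw [Int.ceil_le]; push_cast; nlinarith
  have hc2 : ⌈z * (2:ℝ)^2⌉ ≤ 2 := by
    rw [Int.ceil_le]; push_cast; nlinarith
  -- main case ℓ ≥ 3
  rcases Nat.lt_or_ge ℓ 3 with hl3 | hl3
  · rcases (by omega : ℓ = 1 ∨ ℓ = 2) with rfl | rfl
    · have h11 : Finset.Icc 1 1 = ({1} : Finset ℕ) := rfl
      rw [h11, Finset.sum_singleton]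
      have : ((1:ℕ):ℝ)^2 = (1:ℝ)^2 := by norm_num
      rw [this]
      calc ⌈z * (1:ℝ)^2⌉ ≤ 1 := hc1
        _ ≤ ((1:ℕ):ℤ)^2 := by norm_num
    · have h12 : Finset.Icc 1 2 = ({1, 2} : Finset ℕ) := by decide
      rw [h12, Finset.sum_insert (by decide), Finset.sum_singleton]
      have e1 : ((1:ℕ):ℝ)^2 = (1:ℝ)^2 := by norm_num
      have e2 : ((2:ℕ):ℝ)^2 = (2:ℝ)^2 := by norm_num
      rw [e1, e2]
      have : (((2:ℕ)):ℤ)^2 = 4 := by norm_num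
      rw [this]
      omega
  · have hzgl : z ≤ g ℓ := by rw [hzg]; exact ganti ℓ n hl3 hℓ.2
    have hlR : (3:ℝ) ≤ (ℓ:ℝ) := by exact_mod_cast hl3
    have key : ((∑ t ∈ Finset.Icc 1 ℓ,
        ⌈z * (t : ℝ) ^ 2⌉ : ℤ) : ℝ) ≤ (ℓ:ℝ)^2 := by
      push_cast
      have h1 : (∑ t ∈ Finset.Icc 1 ℓ, (⌈z * (t : ℝ) ^ 2⌉ : ℝ))
          ≤ ∑ t ∈ Finset.Icc 1 ℓ, (z * (t : ℝ) ^ 2 + 1) := by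
        apply Finset.sum_le_sum
        intro t _
        exact le_of_lt (Int.ceil_lt_add_one _)
      have h2 : (∑ t ∈ Finset.Icc 1 ℓ, (z * (t : ℝ) ^ 2 + 1))
          = z * ((ℓ:ℝ)*((ℓ:ℝ)+1)*(2*(ℓ:ℝ)+1)/6) + ℓ := by
        rw [Finset.sum_add_distrib, ← Finset.mul_sum, sumsq]
        simp [Nat.card_Icc]
      have hl0 : (0:ℝ) < (ℓ:ℝ) := by linarith
      have hSpos : (0:ℝ) < (ℓ:ℝ)*((ℓ:ℝ)+1)*(2*(ℓ:ℝ)+1)/6 := by positivity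
      have h3 : z * ((ℓ:ℝ)*((ℓ:ℝ)+1)*(2*(ℓ:ℝ)+1)/6)
          ≤ g ℓ * ((ℓ:ℝ)*((ℓ:ℝ)+1)*(2*(ℓ:ℝ)+1)/6) :=
        mul_le_mul_of_nonneg_right hzgl (le_of_lt hSpos)
      have h4 : g ℓ * ((ℓ:ℝ)*((ℓ:ℝ)+1)*(2*(ℓ:ℝ)+1)/6) = ((ℓ:ℝ)-1)*(ℓ:ℝ) := by
        unfold g
        field_simp
      rw [h4] at h3
      calc (∑ t ∈ Finset.Icc 1 ℓ, (⌈z * (t : ℝ) ^ 2⌉ : ℝ))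
          ≤ z * ((ℓ:ℝ)*((ℓ:ℝ)+1)*(2*(ℓ:ℝ)+1)/6) + ℓ := by rw [← h2]; exact h1
        _ ≤ ((ℓ:ℝ)-1)*(ℓ:ℝ) + ℓ := by linarith
        _ = (ℓ:ℝ)^2 := by ring
    exact_mod_cast key
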